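/- Suppose lim_{x→a⁺} s(x) = ∞ and lim_{x→b} s(x)·M[a,x] = ∞. Let F* be a real number with F* > γ c̄(b) and define G(x) = F* ξ(x) − γ g(x) for x ∈ (a,b). Then G′(x) > 0 for all x ∈ (a,b); that is, G is strictly increasing on (a,b). -/

import Mathlib

open MeasureTheory Filter Set Topology
open scoped Classical

noncomputable section

/-- The state interval `(a, b)` where `a` is real and `b ∈ (a, ∞]`. -/
def stInt (a : ℝ) (b : EReal) : Set ℝ := {x : ℝ | a < x ∧ (x : EReal) < b}

/-- The filter of approach to the right endpoint `b ∈ (a, ∞]`: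
`atTop` when `b = ∞`, and the left-neighborhood filter of `b` otherwise. -/
def atB (b : EReal) : Filter ℝ :=
  if b = ⊤ then Filter.atTop else nhdsWithin b.toReal (Set.Iio b.toReal)

/-- The scale density `s(x) = exp(-∫_{x₀}^x 2μ/σ²)`. -/
def sDen (μ σ : ℝ → ℝ) (x₀ x : ℝ) : ℝ :=
  Real.exp (-(∫ y in x₀..x, 2 * μ y / (σ y) ^ 2))

/-- The speed density `m(x) = 2/(σ(x)² s(x))`. -/
def mDen (μ σ : ℝ → ℝ) (x₀ x : ℝ) : ℝ :=
  2 / ((σ x) ^ 2 * sDen μ σ x₀ x)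

/-- `M[a,x] = ∫_a^x m(u) du`. -/
def Mab (μ σ : ℝ → ℝ) (x₀ a x : ℝ) : ℝ :=
  ∫ u in Set.Ioo a x, mDen μ σ x₀ u

/-- The time potential `ξ(x) = ∫_{x₀}^x M[a,v] s(v) dv`. -/
def xiF (μ σ : ℝ → ℝ) (x₀ a x : ℝ) : ℝ :=
  ∫ v in x₀..x, Mab μ σ x₀ a v * sDen μ σ x₀ v

/-- The running reward potential `g(x) = ∫_{x₀}^x (∫_a^v c(u) m(u) du) s(v) dv`. -/
def gF (μ σ c : ℝ → ℝ) (x₀ a x : ℝ) : ℝ :=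
  ∫ v in x₀..x, (∫ u in Set.Ioo a v, c u * mDen μ σ x₀ u) * sDen μ σ x₀ v

/-- `h(x) = (∫_a^x (γ c(u) + p μ(u)) m(u) du) / M[a,x]`. -/
def hF (μ σ c : ℝ → ℝ) (x₀ a p γ x : ℝ) : ℝ :=
  (∫ u in Set.Ioo a x, (γ * c u + p * μ u) * mDen μ σ x₀ u) / Mab μ σ x₀ a x

/-- The long-term average reward `F(w,y)` of the `(w,y)`-impulse policy. -/
def FF (μ σ c : ℝ → ℝ) (x₀ a p K γ w y : ℝ) : ℝ :=
  (p * (y - w) - K + γ * (gF μ σ c x₀ a y - gF μ σ c x₀ a w)) /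
    (xiF μ σ x₀ a y - xiF μ σ x₀ a w)

/-- `c̄(b)`: equals `⟨c,π⟩` when `M[a,b] < ∞` and the boundary value `c(b)` otherwise. -/
def cbar (μ σ c : ℝ → ℝ) (x₀ a : ℝ) (b : EReal) (cb : ℝ) : ℝ :=
  if MeasureTheory.IntegrableOn (mDen μ σ x₀) (stInt a b) MeasureTheory.volume then
    (∫ u in stInt a b, c u * mDen μ σ x₀ u) / (∫ u in stInt a b, mDen μ σ x₀ u)
  else cb

/-!
Both potentials are primitives, so `G' = s · (F* M[a,·] − γ ∫_a^· c m)` and it suffices to show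
`∫_a^x c m ≤ c̄(b) M[a,x]`. If `M[a,b] = ∞` this is `c ≤ c(b)`. If `M[a,b] < ∞` it says that the
`m`-average of the increasing function `c` over `(a,x)` is at most its average over `(a,b)`:
splitting at `x`, `c ≤ c(x)` on the left piece and `c ≥ c(x)` on the right one.
-/

lemma hasDerivAt_intervalIntegral_of_continuousOn {S : Set ℝ} (hS : IsOpen S) (hSc : S.OrdConnected)
    {f : ℝ → ℝ} (hf : ContinuousOn f S) {x₀ x : ℝ} (hx₀ : x₀ ∈ S) (hx : x ∈ S) :
    HasDerivAt (fun t => ∫ y in x₀..t, f y) (f x) x :=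
  intervalIntegral.integral_hasDerivAt_right
    (hf.mono (hSc.uIcc_subset hx₀ hx)).intervalIntegrable
    (hf.stronglyMeasurableAtFilter hS x hx) (hf.continuousAt (hS.mem_nhds hx))

lemma setIntegral_Ioo_eq_add_intervalIntegral {f : ℝ → ℝ} {a u v : ℝ} (hu : a ≤ u) (hv : a ≤ v)
    (hfu : IntegrableOn f (Ioo a u)) (hfv : IntegrableOn f (Ioo a v)) :
    ∫ t in Ioo a v, f t = (∫ t in Ioo a u, f t) + ∫ t in u..v, f t := by
  wlog huv : u ≤ v generalizing u v
  · have hvu := this hv hu hfv hfu (le_of_not_ge huv)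
    rw [intervalIntegral.integral_symm] at hvu
    linarith
  have hfv' : IntegrableOn f (Ioc a v) := by rwa [integrableOn_Ioc_iff_integrableOn_Ioo]
  rw [← integral_Ioc_eq_integral_Ioo, ← integral_Ioc_eq_integral_Ioo,
    intervalIntegral.integral_of_le huv, ← Ioc_union_Ioc_eq_Ioc hu huv,
    setIntegral_union (Ioc_disjoint_Ioc_of_le le_rfl) measurableSet_Ioc
      (hfv'.mono_set (Ioc_subset_Ioc_right huv)) (hfv'.mono_set (Ioc_subset_Ioc_left hu))]

lemma hasDerivAt_setIntegral_Ioo {f : ℝ → ℝ} {a x : ℝ} {S : Set ℝ} (hS : IsOpen S)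
    (haS : S ⊆ Ioi a) (hf : ContinuousOn f S) (hfi : ∀ t ∈ S, IntegrableOn f (Ioo a t))
    (hx : x ∈ S) :
    HasDerivAt (fun t => ∫ u in Ioo a t, f u) (f x) x := by
  have hprim : HasDerivAt (fun t => (∫ u in Ioo a x, f u) + ∫ u in x..t, f u) (f x) x :=
    (intervalIntegral.integral_hasDerivAt_right IntervalIntegrable.refl
      (hf.stronglyMeasurableAtFilter hS x hx) (hf.continuousAt (hS.mem_nhds hx))).const_add _
  refine hprim.congr_of_eventuallyEq ?_
  filter_upwards [hS.mem_nhds hx] with t ht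
  exact setIntegral_Ioo_eq_add_intervalIntegral (haS hx).le (haS ht).le (hfi x hx) (hfi t ht)

/-- Weighted Chebyshev: the `f`-average of `c` over `T` is at most its average over `S`. -/
lemma setIntegral_mul_setIntegral_le_of_le_on_of_ge_on {α : Type*} [MeasurableSpace α]
    {ν : Measure α} {S T : Set α} {c f : α → ℝ} {k : ℝ} (hS : MeasurableSet S)
    (hT : MeasurableSet T) (hTS : T ⊆ S) (hf : IntegrableOn f S ν) (hcf : IntegrableOn (fun u => c u * f u) S ν)
    (hf0 : ∀ u ∈ S, 0 ≤ f u) (hcT : ∀ u ∈ T, c u ≤ k) (hcS : ∀ u ∈ S \ T, k ≤ c u) :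
    (∫ u in T, c u * f u ∂ν) * ∫ u in S, f u ∂ν ≤ (∫ u in S, c u * f u ∂ν) * ∫ u in T, f u ∂ν := by
  have hST : MeasurableSet (S \ T) := hS.diff hT
  have hsplit (g : α → ℝ) (hg : IntegrableOn g S ν) :
      ∫ u in S, g u ∂ν = ∫ u in S \ T, g u ∂ν + ∫ u in T, g u ∂ν := by
    rw [← setIntegral_union disjoint_sdiff_left hT (hg.mono_set sdiff_subset) (hg.mono_set hTS),
      sdiff_union_of_subset hTS]
  have hleft : ∫ u in T, c u * f u ∂ν ≤ k * ∫ u in T, f u ∂ν := by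
    rw [← integral_const_mul]
    exact setIntegral_mono_on (hcf.mono_set hTS) ((hf.mono_set hTS).const_mul k) hT
      fun u hu => mul_le_mul_of_nonneg_right (hcT u hu) (hf0 u (hTS hu))
  have hright : k * ∫ u in S \ T, f u ∂ν ≤ ∫ u in S \ T, c u * f u ∂ν := by
    rw [← integral_const_mul]
    exact setIntegral_mono_on ((hf.mono_set sdiff_subset).const_mul k) (hcf.mono_set sdiff_subset)
      hST fun u hu => mul_le_mul_of_nonneg_right (hcS u hu) (hf0 u hu.1)
  have hT0 : 0 ≤ ∫ u in T, f u ∂ν := setIntegral_nonneg hT fun u hu => hf0 u (hTS hu)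
  have hST0 : 0 ≤ ∫ u in S \ T, f u ∂ν := setIntegral_nonneg hST fun u hu => hf0 u hu.1
  rw [hsplit f hf, hsplit _ hcf]
  nlinarith

section StateInterval

variable {a x : ℝ} {b : EReal}

lemma isOpen_stInt (a : ℝ) (b : EReal) : IsOpen (stInt a b) :=
  isOpen_Ioi.inter (isOpen_Iio.preimage continuous_coe_real_ereal)

lemma ordConnected_stInt (a : ℝ) (b : EReal) : (stInt a b).OrdConnected :=
  ⟨fun _ hx _ hy _ hz => ⟨hx.1.trans_le hz.1, (EReal.coe_le_coe_iff.2 hz.2).trans_lt hy.2⟩⟩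

lemma stInt_subset_Ioi (a : ℝ) (b : EReal) : stInt a b ⊆ Ioi a := fun _ hx => hx.1

lemma Ioo_subset_stInt (hx : x ∈ stInt a b) : Ioo a x ⊆ stInt a b :=
  fun _ hy => ⟨hy.1, (EReal.coe_lt_coe_iff.2 hy.2).trans hx.2⟩

instance atB_neBot (b : EReal) : (atB b).NeBot := by
  unfold atB
  split_ifs <;> infer_instance

lemma eventually_atB_mem_stInt_and_le (hx : x ∈ stInt a b) :
    ∀ᶠ y in atB b, y ∈ stInt a b ∧ x ≤ y := by
  unfold atB
  split_ifs with hb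
  · filter_upwards [eventually_ge_atTop x] with y hy
    exact ⟨⟨hx.1.trans_le hy, hb ▸ EReal.coe_lt_top y⟩, hy⟩
  · have hbb : ((b.toReal : ℝ) : EReal) = b := EReal.coe_toReal hb (ne_bot_of_gt hx.2)
    have hxb : x < b.toReal := by
      rw [← EReal.coe_lt_coe_iff, hbb]
      exact hx.2
    filter_upwards [Ioo_mem_nhdsLT hxb] with y hy
    exact ⟨⟨hx.1.trans hy.1, hbb ▸ EReal.coe_lt_coe_iff.2 hy.2⟩, hy.1.le⟩

lemma MonotoneOn.le_of_tendsto_atB {c : ℝ → ℝ} {cb : ℝ} (hc : MonotoneOn c (stInt a b))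
    (hcb : Tendsto c (atB b) (𝓝 cb)) (hx : x ∈ stInt a b) : c x ≤ cb :=
  ge_of_tendsto hcb ((eventually_atB_mem_stInt_and_le hx).mono fun _ hy => hc hx hy.1 hy.2)

end StateInterval

section Diffusion

variable {a x x₀ : ℝ} {b : EReal} {μ σ c : ℝ → ℝ}

lemma sDen_pos (μ σ : ℝ → ℝ) (x₀ x : ℝ) : 0 < sDen μ σ x₀ x := Real.exp_pos _

lemma mDen_pos (hσx : 0 < σ x ^ 2) : 0 < mDen μ σ x₀ x :=
  div_pos two_pos (mul_pos hσx (sDen_pos μ σ x₀ x))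

lemma continuousOn_sDen (hx₀ : x₀ ∈ stInt a b) (hμ : ContinuousOn μ (stInt a b))
    (hσ : ContinuousOn σ (stInt a b)) (hσpos : ∀ x ∈ stInt a b, 0 < σ x ^ 2) :
    ContinuousOn (sDen μ σ x₀) (stInt a b) := by
  have hdrift : ContinuousOn (fun y => 2 * μ y / σ y ^ 2) (stInt a b) :=
    (continuousOn_const.mul hμ).div (hσ.pow 2) fun x hx => (hσpos x hx).ne'
  refine Real.continuous_exp.comp_continuousOn (ContinuousOn.neg fun x hx => ?_)
  exact (hasDerivAt_intervalIntegral_of_continuousOn (isOpen_stInt a b) (ordConnected_stInt a b)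
    hdrift hx₀ hx).continuousAt.continuousWithinAt

lemma continuousOn_mDen (hx₀ : x₀ ∈ stInt a b) (hμ : ContinuousOn μ (stInt a b))
    (hσ : ContinuousOn σ (stInt a b)) (hσpos : ∀ x ∈ stInt a b, 0 < σ x ^ 2) :
    ContinuousOn (mDen μ σ x₀) (stInt a b) :=
  continuousOn_const.div ((hσ.pow 2).mul (continuousOn_sDen hx₀ hμ hσ hσpos))
    fun x hx => (mul_pos (hσpos x hx) (sDen_pos μ σ x₀ x)).ne'

lemma Mab_pos (hσpos : ∀ x ∈ stInt a b, 0 < σ x ^ 2) (hx : x ∈ stInt a b)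
    (hm : IntegrableOn (mDen μ σ x₀) (Ioo a x)) : 0 < Mab μ σ x₀ a x := by
  rw [Mab, ← integral_Ioc_eq_integral_Ioo, ← intervalIntegral.integral_of_le hx.1.le]
  exact intervalIntegral.intervalIntegral_pos_of_pos_on
    ((intervalIntegrable_iff_integrableOn_Ioo_of_le hx.1.le).2 hm)
    (fun u hu => mDen_pos (hσpos u (Ioo_subset_stInt hx hu))) hx.1

lemma hasDerivAt_intervalIntegral_setIntegral_Ioo_mul_sDen {f : ℝ → ℝ}
    (hx₀ : x₀ ∈ stInt a b) (hμ : ContinuousOn μ (stInt a b)) (hσ : ContinuousOn σ (stInt a b))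
    (hσpos : ∀ x ∈ stInt a b, 0 < σ x ^ 2) (hf : ContinuousOn f (stInt a b))
    (hfi : ∀ t ∈ stInt a b, IntegrableOn f (Ioo a t)) (hx : x ∈ stInt a b) :
    HasDerivAt (fun t => ∫ v in x₀..t, (∫ u in Ioo a v, f u) * sDen μ σ x₀ v)
      ((∫ u in Ioo a x, f u) * sDen μ σ x₀ x) x := by
  have hF : ContinuousOn (fun v => ∫ u in Ioo a v, f u) (stInt a b) := fun v hv =>
    (hasDerivAt_setIntegral_Ioo (isOpen_stInt a b) (stInt_subset_Ioi a b) hf hfi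
      hv).continuousAt.continuousWithinAt
  exact hasDerivAt_intervalIntegral_of_continuousOn (isOpen_stInt a b) (ordConnected_stInt a b)
    (hF.mul (continuousOn_sDen hx₀ hμ hσ hσpos)) hx₀ hx

lemma integrableOn_mul_mDen {U : Set ℝ} {cb : ℝ} (hU : MeasurableSet U) (hUS : U ⊆ stInt a b)
    (hm : IntegrableOn (mDen μ σ x₀) U)
    (hc : ContinuousOn c (stInt a b)) (hc0 : ∀ x ∈ stInt a b, 0 ≤ c x)
    (hcmono : MonotoneOn c (stInt a b)) (hcb : Tendsto c (atB b) (𝓝 cb)) :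
    IntegrableOn (fun u => c u * mDen μ σ x₀ u) U := by
  refine hm.bdd_mul (c := cb) ((hc.mono hUS).aestronglyMeasurable hU) ((ae_restrict_iff' hU).2
    (Eventually.of_forall fun u hu => ?_))
  rw [Real.norm_of_nonneg (hc0 u (hUS hu))]
  exact hcmono.le_of_tendsto_atB hcb (hUS hu)

lemma hasDerivAt_xiF (hx₀ : x₀ ∈ stInt a b) (hμ : ContinuousOn μ (stInt a b))
    (hσ : ContinuousOn σ (stInt a b)) (hσpos : ∀ x ∈ stInt a b, 0 < σ x ^ 2)
    (hMfin : ∀ x ∈ stInt a b, IntegrableOn (mDen μ σ x₀) (Ioo a x)) (hx : x ∈ stInt a b) :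
    HasDerivAt (xiF μ σ x₀ a) (Mab μ σ x₀ a x * sDen μ σ x₀ x) x :=
  hasDerivAt_intervalIntegral_setIntegral_Ioo_mul_sDen hx₀ hμ hσ hσpos
    (continuousOn_mDen hx₀ hμ hσ hσpos) hMfin hx

lemma hasDerivAt_gF {cb : ℝ} (hx₀ : x₀ ∈ stInt a b) (hμ : ContinuousOn μ (stInt a b))
    (hσ : ContinuousOn σ (stInt a b)) (hσpos : ∀ x ∈ stInt a b, 0 < σ x ^ 2)
    (hMfin : ∀ x ∈ stInt a b, IntegrableOn (mDen μ σ x₀) (Ioo a x))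
    (hc : ContinuousOn c (stInt a b)) (hc0 : ∀ x ∈ stInt a b, 0 ≤ c x)
    (hcmono : MonotoneOn c (stInt a b)) (hcb : Tendsto c (atB b) (𝓝 cb)) (hx : x ∈ stInt a b) :
    HasDerivAt (gF μ σ c x₀ a) ((∫ u in Ioo a x, c u * mDen μ σ x₀ u) * sDen μ σ x₀ x) x :=
  hasDerivAt_intervalIntegral_setIntegral_Ioo_mul_sDen hx₀ hμ hσ hσpos
    (hc.mul (continuousOn_mDen hx₀ hμ hσ hσpos))
    (fun t ht => integrableOn_mul_mDen measurableSet_Ioo (Ioo_subset_stInt ht) (hMfin t ht)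
      hc hc0 hcmono hcb) hx

lemma setIntegral_Ioo_mul_mDen_le_cbar_mul_Mab {cb : ℝ} (hx₀ : x₀ ∈ stInt a b)
    (hμ : ContinuousOn μ (stInt a b)) (hσ : ContinuousOn σ (stInt a b))
    (hσpos : ∀ x ∈ stInt a b, 0 < σ x ^ 2)
    (hMfin : ∀ x ∈ stInt a b, IntegrableOn (mDen μ σ x₀) (Ioo a x))
    (hc : ContinuousOn c (stInt a b)) (hc0 : ∀ x ∈ stInt a b, 0 ≤ c x)
    (hcmono : MonotoneOn c (stInt a b)) (hcb : Tendsto c (atB b) (𝓝 cb)) (hx : x ∈ stInt a b) :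
    ∫ u in Ioo a x, c u * mDen μ σ x₀ u ≤ cbar μ σ c x₀ a b cb * Mab μ σ x₀ a x := by
  have hmc := continuousOn_mDen hx₀ hμ hσ hσpos
  have hm0 : ∀ u ∈ stInt a b, 0 ≤ mDen μ σ x₀ u := fun u hu => (mDen_pos (hσpos u hu)).le
  have hIoo := Ioo_subset_stInt hx
  by_cases hI : IntegrableOn (mDen μ σ x₀) (stInt a b)
  · have hS := (isOpen_stInt a b).measurableSet
    have hMab_le : Mab μ σ x₀ a x ≤ ∫ u in stInt a b, mDen μ σ x₀ u :=
      setIntegral_mono_set hI ((ae_restrict_iff' hS).2 (Eventually.of_forall hm0))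
        hIoo.eventuallyLE
    rw [cbar, if_pos hI, div_mul_eq_mul_div,
      le_div_iff₀ ((Mab_pos hσpos hx (hMfin x hx)).trans_le hMab_le)]
    refine setIntegral_mul_setIntegral_le_of_le_on_of_ge_on hS measurableSet_Ioo hIoo hI
      (integrableOn_mul_mDen hS subset_rfl hI hc hc0 hcmono hcb) hm0
      (fun u hu => hcmono (hIoo hu) hx hu.2.le) fun u hu => hcmono hx hu.1 ?_
    exact not_lt.1 fun hux => hu.2 ⟨hu.1.1, hux⟩
  · rw [cbar, if_neg hI, Mab, ← integral_const_mul]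
    exact setIntegral_mono_on
      (integrableOn_mul_mDen measurableSet_Ioo hIoo (hMfin x hx) hc hc0 hcmono hcb)
      ((hMfin x hx).const_mul cb) measurableSet_Ioo fun u hu =>
        mul_le_mul_of_nonneg_right (hcmono.le_of_tendsto_atB hcb (hIoo hu)) (hm0 u (hIoo hu))

end Diffusion

theorem statement14_general    (a : ℝ) (b : EReal)
    (μ σ : ℝ → ℝ) (x₀ : ℝ) (hx₀ : x₀ ∈ stInt a b)
    (hμcont : ContinuousOn μ (stInt a b)) (hσcont : ContinuousOn σ (stInt a b))
    (hσpos : ∀ x ∈ stInt a b, 0 < (σ x) ^ 2)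
    (hMfin : ∀ x ∈ stInt a b, IntegrableOn (mDen μ σ x₀) (Set.Ioo a x))
    (c : ℝ → ℝ) (hccont : ContinuousOn c (stInt a b))
    (hcnn : ∀ x ∈ stInt a b, 0 ≤ c x) (hcmono : MonotoneOn c (stInt a b))
    (cb : ℝ) (hcb : Tendsto c (atB b) (𝓝 cb))
    (γ : ℝ) (hγ : 0 < γ) (Fstar : ℝ) (hFstar : γ * cbar μ σ c x₀ a b cb < Fstar) :
    (∀ x ∈ stInt a b,
      0 < deriv (fun t => Fstar * xiF μ σ x₀ a t - γ * gF μ σ c x₀ a t) x) ∧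
    StrictMonoOn (fun t => Fstar * xiF μ σ x₀ a t - γ * gF μ σ c x₀ a t) (stInt a b) := by
  have hG : ∀ x ∈ stInt a b,
      HasDerivAt (fun t => Fstar * xiF μ σ x₀ a t - γ * gF μ σ c x₀ a t)
        (sDen μ σ x₀ x * (Fstar * Mab μ σ x₀ a x - γ * ∫ u in Ioo a x, c u * mDen μ σ x₀ u)) x :=
    fun x hx => (((hasDerivAt_xiF hx₀ hμcont hσcont hσpos hMfin hx).const_mul Fstar).sub
      ((hasDerivAt_gF hx₀ hμcont hσcont hσpos hMfin hccont hcnn hcmono hcb hx).const_mul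
        γ)).congr_deriv (by ring)
  have hpos : ∀ x ∈ stInt a b,
      0 < deriv (fun t => Fstar * xiF μ σ x₀ a t - γ * gF μ σ c x₀ a t) x := by
    intro x hx
    rw [(hG x hx).deriv]
    refine mul_pos (sDen_pos μ σ x₀ x) (sub_pos.2 ?_)
    calc γ * ∫ u in Ioo a x, c u * mDen μ σ x₀ u
        ≤ γ * cbar μ σ c x₀ a b cb * Mab μ σ x₀ a x := by
          rw [mul_assoc]
          exact mul_le_mul_of_nonneg_left (setIntegral_Ioo_mul_mDen_le_cbar_mul_Mab hx₀ hμcont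
            hσcont hσpos hMfin hccont hcnn hcmono hcb hx) hγ.le
      _ < Fstar * Mab μ σ x₀ a x := mul_lt_mul_of_pos_right hFstar (Mab_pos hσpos hx (hMfin x hx))
  exact ⟨hpos, strictMonoOn_of_deriv_pos (ordConnected_stInt a b).convex
    (fun x hx => (hG x hx).continuousAt.continuousWithinAt)
    (by rwa [(isOpen_stInt a b).interior_eq])⟩

theorem statement14    (a : ℝ) (b : EReal) (hab : (a : EReal) < b)
    (μ σ : ℝ → ℝ) (x₀ : ℝ) (hx₀ : x₀ ∈ stInt a b)
    (hμcont : ContinuousOn μ (stInt a b)) (hσcont : ContinuousOn σ (stInt a b))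
    (hσpos : ∀ x ∈ stInt a b, 0 < (σ x) ^ 2)
    (hMfin : ∀ x ∈ stInt a b, IntegrableOn (mDen μ σ x₀) (Set.Ioo a x))
    (hsa : Tendsto (sDen μ σ x₀) (𝓝[>] a) atTop)
    (hsMb : Tendsto (fun x => sDen μ σ x₀ x * Mab μ σ x₀ a x) (atB b) atTop)
    (c : ℝ → ℝ) (hccont : ContinuousOn c (stInt a b))
    (hcnn : ∀ x ∈ stInt a b, 0 ≤ c x) (hcmono : MonotoneOn c (stInt a b))
    (ca cb : ℝ) (hca : Tendsto c (𝓝[>] a) (𝓝 ca)) (hcb : Tendsto c (atB b) (𝓝 cb))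
    (hca0 : 0 ≤ ca) (hcacb : ca < cb)
    (γ : ℝ) (hγ : 0 < γ) (Fstar : ℝ) (hFstar : γ * cbar μ σ c x₀ a b cb < Fstar) :
    (∀ x ∈ stInt a b,
      0 < deriv (fun t => Fstar * xiF μ σ x₀ a t - γ * gF μ σ c x₀ a t) x) ∧
    StrictMonoOn (fun t => Fstar * xiF μ σ x₀ a t - γ * gF μ σ c x₀ a t) (stInt a b) :=
  statement14_general a b μ σ x₀ hx₀ hμcont hσcont hσpos hMfin c hccont hcnn hcmono cb hcb γ hγ
    Fstar hFstar
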